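/- Feature-inclusion lower-bound rule: suppose (β̄, ᾱ) ∈ ℝ^p × ℝ^n is a saddle point of L. Let α ∈ ℝ^n, β ∈ ℝ^p and set r = √(2(P(β) − D(α))). If an index j satisfies |⟨x_j, α⟩| − ‖x_j‖·r > 2√(λ₀λ₂) + λ₁, then β̄_j ≠ 0. -/

import Mathlib

/-!
At a saddle point, `ᾱ = Xβ̄ - y` and `L(β̄, ·)` is `½`-strongly concave, so weak duality
`D(α) ≤ L(β̄, α)`, `L(β, ᾱ) ≤ P(β)` puts `ᾱ` in the ball of radius `r` around any dual point `α`.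
Hence `|⟨x_j, ᾱ⟩| > 2√(λ₀λ₂) + λ₁`. On the other hand `β̄` minimizes `L(·, ᾱ)`, which is
separable; if `β̄_j = 0`, moving coordinate `j` to `±√(λ₀/λ₂)` must not decrease it, and this
forces `|⟨x_j, ᾱ⟩| ≤ 2√(λ₀λ₂) + λ₁`.
-/

noncomputable section

/-- ℓ₀ "norm": number of nonzero entries, as a real number. -/
def zeroNorm {p : ℕ} (β : EuclideanSpace ℝ (Fin p)) : ℝ :=
  ((Finset.univ.filter fun j => β j ≠ 0).card : ℝ)

/-- ℓ₁ norm. -/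
def oneNorm {p : ℕ} (β : EuclideanSpace ℝ (Fin p)) : ℝ := ∑ j, |β j|

/-- `X β`, where `x j` is the `j`-th column of `X`. -/
def Xmul {n p : ℕ} (x : Fin p → EuclideanSpace ℝ (Fin n))
    (β : EuclideanSpace ℝ (Fin p)) : EuclideanSpace ℝ (Fin n) :=
  ∑ j, β j • x j

/-- Primal objective `P(β)`. -/
def Pobj {n p : ℕ} (x : Fin p → EuclideanSpace ℝ (Fin n)) (y : EuclideanSpace ℝ (Fin n))
    (l0 l1 l2 : ℝ) (β : EuclideanSpace ℝ (Fin p)) : ℝ :=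
  (1/2) * ‖y - Xmul x β‖^2 + l0 * zeroNorm β + l1 * oneNorm β + l2 * ‖β‖^2

/-- Lagrangian `L(β, α)`. -/
def Lag {n p : ℕ} (x : Fin p → EuclideanSpace ℝ (Fin n)) (y : EuclideanSpace ℝ (Fin n))
    (l0 l1 l2 : ℝ) (β : EuclideanSpace ℝ (Fin p)) (α : EuclideanSpace ℝ (Fin n)) : ℝ :=
  (inner ℝ α (Xmul x β) : ℝ) - (1/2) * ‖α‖^2 - (inner ℝ y α : ℝ)
    + l0 * zeroNorm β + l1 * oneNorm β + l2 * ‖β‖^2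

/-- `η_j(α) = −⟨x_j, α⟩ / (2 λ₂)`. -/
def etav {n p : ℕ} (x : Fin p → EuclideanSpace ℝ (Fin n)) (l2 : ℝ)
    (α : EuclideanSpace ℝ (Fin n)) (j : Fin p) : ℝ :=
  -(inner ℝ (x j) α : ℝ) / (2 * l2)

/-- Threshold `η₀ = (2√(λ₀λ₂) + λ₁)/(2λ₂)`. -/
def eta0 (l0 l1 l2 : ℝ) : ℝ := (2 * Real.sqrt (l0 * l2) + l1) / (2 * l2)

/-- Scalar function `ψ` appearing in the dual objective. -/
def psi (l0 l1 l2 : ℝ) (t : ℝ) : ℝ :=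
  if eta0 l0 l1 l2 ≤ |t| then -l2 * (|t| - l1 / (2 * l2))^2 + l0 else 0

/-- Dual objective `D(α)` for the square loss. -/
def Dobj {n p : ℕ} (x : Fin p → EuclideanSpace ℝ (Fin n)) (y : EuclideanSpace ℝ (Fin n))
    (l0 l1 l2 : ℝ) (α : EuclideanSpace ℝ (Fin n)) : ℝ :=
  -(1/2) * ‖α‖^2 - (inner ℝ y α : ℝ) + ∑ j : Fin p, psi l0 l1 l2 (etav x l2 α j)

/-- Thresholding map `𝔅`. -/
def Bth (l0 l1 l2 : ℝ) (t : ℝ) : ℝ :=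
  if eta0 l0 l1 l2 ≤ |t| then Real.sign t * (|t| - l1 / (2 * l2)) else 0

/-- Primal-dual link `β(α)` with entries `β_j(α) = 𝔅(η_j(α))`. -/
def betaOf {n p : ℕ} (x : Fin p → EuclideanSpace ℝ (Fin n)) (l0 l1 l2 : ℝ)
    (α : EuclideanSpace ℝ (Fin n)) : EuclideanSpace ℝ (Fin p) :=
  WithLp.toLp 2 (fun j => Bth l0 l1 l2 (etav x l2 α j))

/-- `(β̄, ᾱ)` is a saddle point of the Lagrangian `L`. -/
def IsSaddle {n p : ℕ} (x : Fin p → EuclideanSpace ℝ (Fin n)) (y : EuclideanSpace ℝ (Fin n))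
    (l0 l1 l2 : ℝ) (βb : EuclideanSpace ℝ (Fin p)) (αb : EuclideanSpace ℝ (Fin n)) : Prop :=
  (∀ α, Lag x y l0 l1 l2 βb α ≤ Lag x y l0 l1 l2 βb αb) ∧
  (∀ β, Lag x y l0 l1 l2 βb αb ≤ Lag x y l0 l1 l2 β αb)

open scoped RealInnerProductSpace

def coordPenalty (l0 l1 l2 b : ℝ) : ℝ := (if b = 0 then 0 else l0) + l1 * |b| + l2 * b ^ 2

theorem coordPenalty_zero (l0 l1 l2 : ℝ) : coordPenalty l0 l1 l2 0 = 0 := by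
  simp [coordPenalty]

theorem sum_apply_update_eq {ι α M : Type*} [Fintype ι] [DecidableEq ι] [AddCommGroup M]
    (g : ι → α → M) (f : ι → α) (j : ι) (b : α) :
    ∑ k, g k (Function.update f j b k) = ∑ k, g k (f k) - g j (f j) + g j b := by
  have hupd : ∀ f' : ι → α, ∑ k, g k (f' k) = g j (f' j) + ∑ k ∈ Finset.univ.erase j, g k (f' k) :=
    fun f' => (Finset.add_sum_erase _ _ (Finset.mem_univ j)).symm
  rw [hupd, hupd f, Function.update_self,
    Finset.sum_congr rfl fun k hk => by rw [Function.update_of_ne (Finset.ne_of_mem_erase hk)]]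
  abel

/-- `ψ(t)` is the minimum over `b` of the right-hand side, attained at `b = Bth l0 l1 l2 t`. -/
theorem psi_le (l0 l1 : ℝ) {l2 : ℝ} (hl0 : 0 ≤ l0) (hl2 : 0 < l2) (t b : ℝ) :
    psi l0 l1 l2 t ≤ -2 * l2 * t * b + coordPenalty l0 l1 l2 b := by
  set q := Real.sqrt (l0 * l2)
  have hq : q ^ 2 = l0 * l2 := Real.sq_sqrt (by positivity)
  have hcross : -(2 * l2 * |t| * |b|) ≤ -2 * l2 * t * b := by
    have : |2 * l2 * t * b| = 2 * l2 * |t| * |b| := by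
      rw [abs_mul, abs_mul, abs_mul, abs_two, abs_of_pos hl2]
    linarith [le_abs_self (2 * l2 * t * b)]
  have hm : 2 * l2 * (|t| - l1 / (2 * l2)) = 2 * l2 * |t| - l1 := by field_simp
  unfold psi eta0 coordPenalty
  split_ifs with ht hb hb
  · subst hb
    rw [div_le_iff₀ (by positivity)] at ht
    simp only [abs_zero]
    nlinarith [sq_nonneg (2 * l2 * (|t| - l1 / (2 * l2)) - 2 * q), Real.sqrt_nonneg (l0 * l2)]
  · have hmb := congrArg (· * |b|) hm
    nlinarith [mul_nonneg hl2.le (sq_nonneg (|b| - (|t| - l1 / (2 * l2)))), sq_abs b]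
  · subst hb; simp
  · rw [not_le, lt_div_iff₀ (by positivity)] at ht
    rw [← sq_abs b]
    nlinarith [sq_nonneg (l2 * |b| - q), mul_le_mul_of_nonneg_right ht.le (abs_nonneg b)]

/-- Test the hypothesis at `b = ±√(λ₀/λ₂)`, where `λ₂b² = λ₀`. -/
theorem abs_le_of_forall_coordPenalty {l0 l1 l2 s : ℝ} (hl0 : 0 < l0) (hl2 : 0 < l2)
    (h : ∀ b, 0 ≤ b * s + coordPenalty l0 l1 l2 b) :
    |s| ≤ 2 * Real.sqrt (l0 * l2) + l1 := by
  set c := Real.sqrt (l0 / l2)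
  have hc : 0 < c := Real.sqrt_pos.mpr (by positivity)
  have hc2 : l2 * c ^ 2 = l0 := by rw [Real.sq_sqrt (by positivity)]; field_simp
  have hcq : c * Real.sqrt (l0 * l2) = l0 := by
    rw [← Real.sqrt_mul (by positivity), show l0 / l2 * (l0 * l2) = l0 ^ 2 by field_simp]
    exact Real.sqrt_sq hl0.le
  have hplus := h c
  have hminus := h (-c)
  simp only [coordPenalty, hc.ne', neg_eq_zero, abs_neg, abs_of_pos hc, if_false, neg_sq]
    at hplus hminus
  have hlow : 0 ≤ c * (2 * Real.sqrt (l0 * l2) + l1 + s) := by linarith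
  have hup : 0 ≤ c * (2 * Real.sqrt (l0 * l2) + l1 - s) := by linarith
  rw [abs_le]
  constructor <;> linarith [nonneg_of_mul_nonneg_right hlow hc, nonneg_of_mul_nonneg_right hup hc]

section Lagrangian

variable {n p : ℕ} (x : Fin p → EuclideanSpace ℝ (Fin n)) (y : EuclideanSpace ℝ (Fin n))
  (l0 l1 l2 : ℝ)

theorem Lag_eq_Pobj_sub (β : EuclideanSpace ℝ (Fin p)) (α : EuclideanSpace ℝ (Fin n)) :
    Lag x y l0 l1 l2 β α = Pobj x y l0 l1 l2 β - 1 / 2 * ‖α - (Xmul x β - y)‖ ^ 2 := by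
  rw [Lag, Pobj, norm_sub_rev y, norm_sub_sq_real α, norm_sub_sq_real, inner_sub_right,
    real_inner_comm y α]
  ring

theorem Lag_le_Pobj (β : EuclideanSpace ℝ (Fin p)) (α : EuclideanSpace ℝ (Fin n)) :
    Lag x y l0 l1 l2 β α ≤ Pobj x y l0 l1 l2 β := by
  rw [Lag_eq_Pobj_sub]
  exact sub_le_self _ (by positivity)

theorem penalty_eq_sum (β : EuclideanSpace ℝ (Fin p)) :
    l0 * zeroNorm β + l1 * oneNorm β + l2 * ‖β‖ ^ 2 = ∑ j, coordPenalty l0 l1 l2 (β j) := by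
  simp only [zeroNorm, oneNorm, EuclideanSpace.real_norm_sq_eq, Finset.natCast_card_filter,
    coordPenalty, Finset.mul_sum, ← Finset.sum_add_distrib]
  refine Finset.sum_congr rfl fun j _ => ?_
  split_ifs <;> simp_all

theorem Lag_eq_sum (β : EuclideanSpace ℝ (Fin p)) (α : EuclideanSpace ℝ (Fin n)) :
    Lag x y l0 l1 l2 β α = -(1 / 2) * ‖α‖ ^ 2 - ⟪y, α⟫
      + ∑ j, (β j * ⟪x j, α⟫ + coordPenalty l0 l1 l2 (β j)) := by
  rw [Finset.sum_add_distrib, ← penalty_eq_sum, Lag, Xmul, inner_sum]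
  simp only [real_inner_smul_right, real_inner_comm α]
  ring

theorem Dobj_le_Lag {l0 l2 : ℝ} (hl0 : 0 ≤ l0) (hl2 : 0 < l2) (β : EuclideanSpace ℝ (Fin p))
    (α : EuclideanSpace ℝ (Fin n)) :
    Dobj x y l0 l1 l2 α ≤ Lag x y l0 l1 l2 β α := by
  rw [Lag_eq_sum, Dobj]
  gcongr with j
  have h := psi_le l0 l1 hl0 hl2 (etav x l2 α j) (β j)
  have he : -2 * l2 * etav x l2 α j = ⟪x j, α⟫ := by unfold etav; field_simp
  rw [he] at h
  linarith

theorem Lag_update_of_eq_zero (β : EuclideanSpace ℝ (Fin p)) (α : EuclideanSpace ℝ (Fin n))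
    {j : Fin p} (hj : β j = 0) (b : ℝ) :
    Lag x y l0 l1 l2 (WithLp.toLp 2 (Function.update β.ofLp j b)) α
      = Lag x y l0 l1 l2 β α + (b * ⟪x j, α⟫ + coordPenalty l0 l1 l2 b) := by
  rw [Lag_eq_sum, Lag_eq_sum, sum_apply_update_eq (fun k t => t * ⟪x k, α⟫ + coordPenalty l0 l1 l2 t), hj]
  rw [coordPenalty_zero]
  ring

end Lagrangian

namespace IsSaddle

variable {n p : ℕ} {x : Fin p → EuclideanSpace ℝ (Fin n)} {y : EuclideanSpace ℝ (Fin n)}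
  {l0 l1 l2 : ℝ} {βb : EuclideanSpace ℝ (Fin p)} {αb : EuclideanSpace ℝ (Fin n)}

theorem eq_Xmul_sub (hsad : IsSaddle x y l0 l1 l2 βb αb) : αb = Xmul x βb - y := by
  have h := hsad.1 (Xmul x βb - y)
  rw [Lag_eq_Pobj_sub, Lag_eq_Pobj_sub, sub_self, norm_zero] at h
  have : ‖αb - (Xmul x βb - y)‖ = 0 := by nlinarith [norm_nonneg (αb - (Xmul x βb - y))]
  exact sub_eq_zero.mp (norm_eq_zero.mp this)

/-- `L(β̄, ·)` is a concave quadratic maximized at `ᾱ`, so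
`½‖α - ᾱ‖² = L(β̄, ᾱ) - L(β̄, α) ≤ L(β, ᾱ) - D(α) ≤ P(β) - D(α)`. -/
theorem norm_sub_le_sqrt_gap (hsad : IsSaddle x y l0 l1 l2 βb αb) (hl0 : 0 ≤ l0) (hl2 : 0 < l2)
    (α : EuclideanSpace ℝ (Fin n)) (β : EuclideanSpace ℝ (Fin p)) :
    ‖α - αb‖ ≤ Real.sqrt (2 * (Pobj x y l0 l1 l2 β - Dobj x y l0 l1 l2 α)) := by
  have hstrong : Lag x y l0 l1 l2 βb αb - Lag x y l0 l1 l2 βb α = 1 / 2 * ‖α - αb‖ ^ 2 := by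
    rw [Lag_eq_Pobj_sub, Lag_eq_Pobj_sub, ← hsad.eq_Xmul_sub]
    simp
  have hgap : 1 / 2 * ‖α - αb‖ ^ 2 ≤ Pobj x y l0 l1 l2 β - Dobj x y l0 l1 l2 α := by
    linarith [hsad.2 β, Lag_le_Pobj x y l0 l1 l2 β αb, Dobj_le_Lag x y l1 hl0 hl2 βb α]
  exact Real.le_sqrt_of_sq_le (by linarith)

theorem abs_inner_le_of_eq_zero (hsad : IsSaddle x y l0 l1 l2 βb αb) (hl0 : 0 < l0)
    (hl2 : 0 < l2) {j : Fin p} (hj : βb j = 0) :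
    |⟪x j, αb⟫| ≤ 2 * Real.sqrt (l0 * l2) + l1 := by
  refine abs_le_of_forall_coordPenalty hl0 hl2 fun b => ?_
  have h := hsad.2 (WithLp.toLp 2 (Function.update βb.ofLp j b))
  rw [Lag_update_of_eq_zero x y l0 l1 l2 βb αb hj] at h
  linarith

end IsSaddle

theorem stmt14_general (n p : ℕ) (x : Fin p → EuclideanSpace ℝ (Fin n))
    (y : EuclideanSpace ℝ (Fin n)) (l0 l1 l2 : ℝ)
    (hl0 : 0 < l0) (hl2 : 0 < l2)
    (βb : EuclideanSpace ℝ (Fin p)) (αb : EuclideanSpace ℝ (Fin n))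
    (hsad : IsSaddle x y l0 l1 l2 βb αb)
    (α : EuclideanSpace ℝ (Fin n)) (β : EuclideanSpace ℝ (Fin p))
    (r : ℝ) (hr : r = Real.sqrt (2 * (Pobj x y l0 l1 l2 β - Dobj x y l0 l1 l2 α)))
    (j : Fin p)
    (hinc : 2 * Real.sqrt (l0 * l2) + l1 < |(inner ℝ (x j) α : ℝ)| - ‖x j‖ * r) :
    βb j ≠ 0 := by
  intro hj
  have hdist : ‖α - αb‖ ≤ r := hr ▸ hsad.norm_sub_le_sqrt_gap hl0.le hl2 α β
  have hclose : |⟪x j, α⟫| - |⟪x j, αb⟫| ≤ ‖x j‖ * r :=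
    calc |⟪x j, α⟫| - |⟪x j, αb⟫| ≤ |⟪x j, α⟫ - ⟪x j, αb⟫| := abs_sub_abs_le_abs_sub _ _
      _ = |⟪x j, α - αb⟫| := by rw [inner_sub_right]
      _ ≤ ‖x j‖ * ‖α - αb‖ := abs_real_inner_le_norm _ _
      _ ≤ ‖x j‖ * r := by gcongr
  linarith [hsad.abs_inner_le_of_eq_zero hl0 hl2 hj]

/-- feature-inclusion lower-bound rule. -/
theorem stmt14 (n p : ℕ) (x : Fin p → EuclideanSpace ℝ (Fin n))
    (y : EuclideanSpace ℝ (Fin n)) (l0 l1 l2 : ℝ)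
    (hl0 : 0 < l0) (hl1 : 0 ≤ l1) (hl2 : 0 < l2)
    (βb : EuclideanSpace ℝ (Fin p)) (αb : EuclideanSpace ℝ (Fin n))
    (hsad : IsSaddle x y l0 l1 l2 βb αb)
    (α : EuclideanSpace ℝ (Fin n)) (β : EuclideanSpace ℝ (Fin p))
    (r : ℝ) (hr : r = Real.sqrt (2 * (Pobj x y l0 l1 l2 β - Dobj x y l0 l1 l2 α)))
    (j : Fin p)
    (hinc : 2 * Real.sqrt (l0 * l2) + l1 < |(inner ℝ (x j) α : ℝ)| - ‖x j‖ * r) :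
    βb j ≠ 0 :=
  stmt14_general n p x y l0 l1 l2 hl0 hl2 βb αb hsad α β r hr j hinc
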